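/- arXiv:1203.0084 — 4 statements merged into one kernel-verified Lean document; each statement's English description precedes it below -/
import Mathlib

section
/- (Uniqueness of the Hukuhara–Turrittin invariants modulo ℤ·dw/w) Let K ≥ 1, let ν_1,…,ν_s and μ_1,…,μ_t be polar forms in ℂ·dw/w^K + ⋯ + ℂ·dw/w such that the ν_i are pairwise distinct modulo ℤ·dw/w and the μ_j are pairwise distinct modulo ℤ·dw/w, and let r_1,…,r_s and t_1,…,t_t be positive integers. If there is a ℂ[[w]]-linear map between ⊕_{i=1}^{s} V(ν_i,r_i) and ⊕_{j=1}^{t} V(μ_j,t_j) compatible with the connections which becomes an isomorphism after inverting w (equivalently, the two modules become isomorphic as modules with connection over the Laurent series field ℂ((w))), then s = t and there is a bijection σ of {1,…,s} such that r_i = t_{σ(i)} and ν_i ≡ μ_{σ(i)} (mod ℤ·dw/w) for all i. -/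
noncomputable section

/-- Formal derivative of a power series over `ℂ`. -/
def psDeriv (f : PowerSeries ℂ) : PowerSeries ℂ :=
  PowerSeries.mk fun n => ((n : ℂ) + 1) * PowerSeries.coeff (n + 1) f

/-- The connection of `V(ν, r)`, where the polar form
`ν = (c_K w^{-K} + ⋯ + c_1 w^{-1})·dw` is encoded by the power series
`p = w^K·ν/dw = c_K + c_{K-1}·w + ⋯ + c_1·w^{K-1}` (of degree `< K`), written
in the trivialization by the generator `dw/w^K`; it sends `a·e_j` to
`(w^K·a')·e_j + p·a·e_j + w^{K-1}·a·e_{j-1}` (with `e_0 = 0`). -/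
def vD (K : ℕ) (p : PowerSeries ℂ) (r : ℕ)
    (f : Fin r → PowerSeries ℂ) : Fin r → PowerSeries ℂ := fun i =>
  (PowerSeries.X : PowerSeries ℂ) ^ K * psDeriv (f i) + p * f i +
    (PowerSeries.X : PowerSeries ℂ) ^ (K - 1) *
      (if h : (i : ℕ) + 1 < r then f ⟨(i : ℕ) + 1, h⟩ else 0)

/-- Congruence of (encoded) polar forms modulo `ℤ·dw/w`: the polar form encoded by
`p = w^K·ν/dw` is congruent to the one encoded by `q` iff `p - q = n·w^{K-1}`
for some integer `n` (note `w^K·(dw/w)/dw = w^{K-1}`). -/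
def CongModZ (K : ℕ) (p q : PowerSeries ℂ) : Prop :=
  ∃ n : ℤ, p - q = PowerSeries.C (n : ℂ) * (PowerSeries.X : PowerSeries ℂ) ^ (K - 1)

/-!
A compatible map splits into blocks `V(νᵢ, aᵢ) → V(μⱼ, bⱼ)`. In matrix form a block `M`
satisfies `w^K M' + (μⱼ - νᵢ) M = w^(K-1) (M N - N M)`, where `N` is the nilpotent shift.
Write `M = w^e A` with `A(0) ≠ 0`: after cancelling `w^e`, the entry of `A` that is a unit
forces `w^(K-1) ∣ μⱼ - νᵢ`, i.e. `μⱼ - νᵢ = c w^(K-1)`, and the constant term of the equation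
then says that `A(0) ≠ 0` is an eigenvector of `X ↦ X N - N X` with eigenvalue `e + c`.
That operator is nilpotent, so `c = -e`: a nonzero block only joins forms congruent mod `ℤ`.
Since `Φ` is invertible after inverting `w`, every row and every column of blocks has a nonzero
entry; the distinctness hypotheses leave exactly one, giving `σ`, and the block `(σ i, i)` is
then itself invertible after inverting `w`, so `aᵢ = b_{σ(i)}`.
-/

open PowerSeries
open scoped Matrix

namespace PowerSeries

variable {R : Type*} [CommRing R]

theorem X_mul_derivative_X_pow (n : ℕ) : X * d⁄dX R (X ^ n) = (n : R⟦X⟧) * X ^ n := by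
  cases n with
  | zero => simp
  | succ n =>
    simp only [Derivation.leibniz_pow, add_tsub_cancel_right, derivative_X, smul_eq_mul, mul_one,
      nsmul_eq_mul, Nat.cast_add, Nat.cast_one]
    ring

theorem eq_C_mul_X_pow_of_coeff_eq_zero {f : R⟦X⟧} {n : ℕ} (h : ∀ k ≠ n, coeff k f = 0) :
    f = C (coeff n f) * X ^ n := by
  ext k
  rw [coeff_C_mul_X_pow]
  split_ifs with hk
  · rw [hk]
  · exact h k hk

end PowerSeries

namespace Matrix

variable {m n : Type*} [Fintype m] [Fintype n]

theorem exists_eq_X_pow_smul {R : Type*} [CommRing R] {M : Matrix m n R⟦X⟧} (hM : M ≠ 0) :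
    ∃ (e : ℕ) (A : Matrix m n R⟦X⟧), M = (X : R⟦X⟧) ^ e • A ∧
      ∃ i j, constantCoeff (A i j) ≠ 0 := by
  classical
  have hbdd : ∃ e, ¬ ∀ i j, (X : R⟦X⟧) ^ (e + 1) ∣ M i j := by
    obtain ⟨i, j, hij⟩ : ∃ i j, M i j ≠ 0 := by
      by_contra! h
      exact hM (Matrix.ext h)
    obtain ⟨k, hk⟩ := exists_coeff_ne_zero_iff_ne_zero.mpr hij
    exact ⟨k, fun h => hk (X_pow_dvd_iff.mp (h i j) k (by omega))⟩
  set e := Nat.find hbdd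
  have hdvd : ∀ i j, (X : R⟦X⟧) ^ e ∣ M i j := by
    rcases Nat.eq_zero_or_eq_succ_pred e with he | he
    · simp [he]
    · rw [he]
      exact not_not.mp (Nat.find_min hbdd (by omega : e.pred < e))
  choose A hA using hdvd
  refine ⟨e, Matrix.of A, Matrix.ext fun i j => hA i j, ?_⟩
  obtain ⟨i, hi⟩ := not_forall.mp (Nat.find_spec hbdd)
  obtain ⟨j, hij⟩ := not_forall.mp hi
  refine ⟨i, j, fun h0 => hij ?_⟩
  rw [hA i j, pow_succ]
  exact mul_dvd_mul_left _ (X_dvd_iff.mpr h0)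

theorem eq_zero_of_smul_eq_mul_sub_mul [DecidableEq m] [DecidableEq n] {k : Type*} [Field k]
    {N₁ : Matrix n n k} {N₂ : Matrix m m k} (h₁ : IsNilpotent N₁) (h₂ : IsNilpotent N₂)
    {A : Matrix m n k} {c : k} (hc : c ≠ 0) (h : c • A = A * N₁ - N₂ * A) : A = 0 := by
  obtain ⟨p, hp⟩ := h₁
  obtain ⟨q, hq⟩ := h₂
  -- descending induction on `i + j`, multiplying `h` by `N₂ ^ i` on the left, `N₁ ^ j` on the right
  have key : ∀ s i j, p + q ≤ i + j + s → N₂ ^ i * A * N₁ ^ j = 0 := by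
    intro s
    induction s with
    | zero =>
      intro i j hij
      rcases le_or_gt q i with hi | hi
      · rw [pow_eq_zero_of_le hi hq, Matrix.zero_mul, Matrix.zero_mul]
      · rw [pow_eq_zero_of_le (by omega : p ≤ j) hp, Matrix.mul_zero]
    | succ s ih =>
      intro i j hij
      have hstep : c • (N₂ ^ i * A * N₁ ^ j) =
          N₂ ^ i * A * N₁ ^ (j + 1) - N₂ ^ (i + 1) * A * N₁ ^ j := by
        rw [← Matrix.smul_mul, ← Matrix.mul_smul, h, pow_succ' N₁, pow_succ N₂]
        simp only [Matrix.mul_sub, Matrix.sub_mul, Matrix.mul_assoc]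
      rw [ih i (j + 1) (by omega), ih (i + 1) j (by omega), sub_zero] at hstep
      exact (smul_eq_zero.mp hstep).resolve_left hc
  simpa using key (p + q) 0 0 (by omega)

end Matrix

section ShiftMatrix

def shiftMatrix (R : Type*) [Zero R] [One R] (r : ℕ) : Matrix (Fin r) (Fin r) R :=
  Matrix.of fun k l => if (k : ℕ) + 1 = l then 1 else 0

variable {R : Type*}

theorem shiftMatrix_pow_apply [Semiring R] (r n : ℕ) (k l : Fin r) :
    (shiftMatrix R r ^ n) k l = if (k : ℕ) + n = l then 1 else 0 := by
  induction n generalizing l with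
  | zero => simp [Matrix.one_apply, Fin.ext_iff]
  | succ n ih =>
    simp only [pow_succ, Matrix.mul_apply, ih]
    simp only [shiftMatrix, Matrix.of_apply, mul_ite, mul_one, mul_zero]
    by_cases h : (k : ℕ) + n < r
    · rw [Finset.sum_eq_single ⟨(k : ℕ) + n, h⟩]
      · simp only [if_true, add_assoc]
      · intro x _ hx
        simp only [ne_eq, Fin.ext_iff] at hx
        simp [Ne.symm hx]
      · simp
    · refine (Finset.sum_eq_zero fun x _ => ?_).trans (if_neg (by omega)).symm
      simp only [ite_eq_right_iff]
      omega

theorem isNilpotent_shiftMatrix [Semiring R] (r : ℕ) : IsNilpotent (shiftMatrix R r) :=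
  ⟨r, by ext k l; exact (shiftMatrix_pow_apply r r k l).trans (if_neg (by omega))⟩

theorem shiftMatrix_map {S : Type*} [Semiring R] [Semiring S] (f : R →+* S) (r : ℕ) :
    (shiftMatrix R r).map f = shiftMatrix S r := by
  ext k l
  simp [shiftMatrix, apply_ite f]

theorem shiftMatrix_mulVec_apply [Semiring R] {r : ℕ} (f : Fin r → R) (k : Fin r) :
    (shiftMatrix R r *ᵥ f) k = if h : (k : ℕ) + 1 < r then f ⟨(k : ℕ) + 1, h⟩ else 0 := by
  simp only [Matrix.mulVec, dotProduct, shiftMatrix, Matrix.of_apply, ite_mul, one_mul, zero_mul]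
  split_ifs with h
  · rw [Finset.sum_eq_single ⟨(k : ℕ) + 1, h⟩] <;> simp +contextual [Fin.ext_iff, eq_comm]
  · exact Finset.sum_eq_zero fun x _ => if_neg (by omega)

end ShiftMatrix

theorem psDeriv_eq_derivative (f : ℂ⟦X⟧) : psDeriv f = d⁄dX ℂ f := by
  ext n
  rw [psDeriv, coeff_mk, coeff_derivative, mul_comm]

theorem vD_eq (K : ℕ) (p : ℂ⟦X⟧) (r : ℕ) (f : Fin r → ℂ⟦X⟧) :
    vD K p r f = (X : ℂ⟦X⟧) ^ K • (fun k => d⁄dX ℂ (f k)) + p • f +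
      (X : ℂ⟦X⟧) ^ (K - 1) • (shiftMatrix ℂ⟦X⟧ r *ᵥ f) := by
  funext k
  simp [vD, shiftMatrix_mulVec_apply, psDeriv_eq_derivative]

theorem vD_zero (K : ℕ) (p : ℂ⟦X⟧) (r : ℕ) : vD K p r 0 = 0 := by
  funext k
  simp [vD, psDeriv_eq_derivative]

theorem matrix_ode_of_mulVec_vD {K : ℕ} {p q : ℂ⟦X⟧} {a b : ℕ}
    {M : Matrix (Fin b) (Fin a) ℂ⟦X⟧}
    (hM : ∀ v, M *ᵥ vD K p a v = vD K q b (M *ᵥ v)) (j : Fin b) (i : Fin a) :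
    X ^ K * d⁄dX ℂ (M j i) + (q - p) * M j i =
      X ^ (K - 1) * (M * shiftMatrix ℂ⟦X⟧ a - shiftMatrix ℂ⟦X⟧ b * M) j i := by
  have hconst : (fun l => d⁄dX ℂ ((Pi.single i 1 : Fin a → ℂ⟦X⟧) l)) = 0 := by
    funext l
    rcases eq_or_ne l i with rfl | hl
    · simp
    · simp [hl]
  have h := congrFun (hM (Pi.single i 1)) j
  simp only [vD_eq, hconst, smul_zero, zero_add, Matrix.mulVec_add, Matrix.mulVec_smul,
    Matrix.mulVec_mulVec] at h
  simp only [Matrix.mulVec_single_one, Pi.add_apply, Pi.smul_apply, smul_eq_mul,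
    Matrix.col_apply] at h
  rw [Matrix.sub_apply]
  linear_combination -h

theorem exists_eq_neg_natCast_mul_X_pow_of_ode {k : Type*} [Field k] {m n : Type*}
    [Fintype m] [Fintype n] [DecidableEq m] [DecidableEq n] {K : ℕ} (hK : 1 ≤ K) {d : k⟦X⟧}
    (hd : ∀ l, K ≤ l → coeff l d = 0) {N₁ : Matrix n n k} {N₂ : Matrix m m k}
    (h₁ : IsNilpotent N₁) (h₂ : IsNilpotent N₂) {M : Matrix m n k⟦X⟧} (hM : M ≠ 0)
    (h : ∀ i j, X ^ K * d⁄dX k (M i j) + d * M i j =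
      X ^ (K - 1) * (M * N₁.map C - N₂.map C * M) i j) :
    ∃ e : ℕ, d = -(C (e : k) * X ^ (K - 1)) := by
  obtain ⟨K, rfl⟩ : ∃ K', K = K' + 1 := ⟨K - 1, by omega⟩
  simp only [Nat.add_sub_cancel] at h ⊢
  obtain ⟨e, A, rfl, i₀, j₀, hA₀⟩ := Matrix.exists_eq_X_pow_smul hM
  set B := A * N₁.map C - N₂.map C * A
  have hA : ∀ i j,
      X ^ K * ((e : k⟦X⟧) * A i j + X * d⁄dX k (A i j) - B i j) + d * A i j = 0 := by
    intro i j
    have hij := h i j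
    rw [Matrix.smul_mul, Matrix.mul_smul, ← smul_sub] at hij
    simp only [Matrix.smul_apply, smul_eq_mul, Derivation.leibniz, pow_succ] at hij
    apply mul_left_cancel₀ (pow_ne_zero e (X_ne_zero (R := k)))
    linear_combination hij - X ^ K * A i j * X_mul_derivative_X_pow (R := k) e
  have hdvd : X ^ K ∣ d := by
    have hunit : IsUnit (A i₀ j₀) := isUnit_iff_constantCoeff.mpr hA₀.isUnit
    refine hunit.dvd_mul_right.mp
      ⟨-((e : k⟦X⟧) * A i₀ j₀ + X * d⁄dX k (A i₀ j₀) - B i₀ j₀), ?_⟩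
    linear_combination hA i₀ j₀
  have hdC : d = C (coeff K d) * X ^ K := by
    refine eq_C_mul_X_pow_of_coeff_eq_zero fun l hl => ?_
    rcases lt_or_gt_of_ne hl with hlt | hgt
    · exact X_pow_dvd_iff.mp hdvd l hlt
    · exact hd l hgt
  set c := coeff K d
  have hA' : ∀ i j, (e : k⟦X⟧) * A i j + X * d⁄dX k (A i j) - B i j + C c * A i j = 0 := by
    intro i j
    apply mul_left_cancel₀ (pow_ne_zero K (X_ne_zero (R := k)))
    linear_combination hA i j - A i j * hdC
  set A₀ := A.map constantCoeff
  have hB₀ : B.map constantCoeff = A₀ * N₁ - N₂ * A₀ := by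
    have hCC : (constantCoeff : k⟦X⟧ →+* k) ∘ C = id := funext constantCoeff_C
    simp [B, A₀, Matrix.map_sub, Matrix.map_mul, Matrix.map_map, hCC]
  have hA₀' : ((e : k) + c) • A₀ = A₀ * N₁ - N₂ * A₀ := by
    ext i j
    have hij := congrArg constantCoeff (hA' i j)
    rw [← hB₀]
    simp only [map_add, map_sub, map_mul, map_natCast, constantCoeff_X, zero_mul, add_zero,
      constantCoeff_C, map_zero] at hij
    simp only [Matrix.smul_apply, Matrix.map_apply, smul_eq_mul, A₀]
    linear_combination hij
  have hc : (e : k) + c = 0 := by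
    by_contra hc
    have := Matrix.eq_zero_of_smul_eq_mul_sub_mul h₁ h₂ hc hA₀'
    exact hA₀ (congrFun (congrFun this i₀) j₀)
  refine ⟨e, ?_⟩
  rw [hdC, show c = -(e : k) by linear_combination hc, map_neg]
  ring

theorem congModZ_of_intertwining {K : ℕ} (hK : 1 ≤ K) {p q : ℂ⟦X⟧}
    (hp : ∀ l, K ≤ l → coeff l p = 0) (hq : ∀ l, K ≤ l → coeff l q = 0) {a b : ℕ}
    {φ : (Fin a → ℂ⟦X⟧) →ₗ[ℂ⟦X⟧] (Fin b → ℂ⟦X⟧)} (hφ : ∀ v, φ (vD K p a v) = vD K q b (φ v))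
    (hne : φ ≠ 0) : CongModZ K p q := by
  set M := LinearMap.toMatrix' φ
  have hM : ∀ v, M *ᵥ vD K p a v = vD K q b (M *ᵥ v) := by
    simpa only [M, LinearMap.toMatrix'_mulVec] using hφ
  have hode := matrix_ode_of_mulVec_vD hM
  rw [← shiftMatrix_map C, ← shiftMatrix_map C] at hode
  obtain ⟨e, he⟩ := exists_eq_neg_natCast_mul_X_pow_of_ode hK (d := q - p)
    (fun l hl => by rw [map_sub, hp l hl, hq l hl, sub_zero]) (isNilpotent_shiftMatrix a)
    (isNilpotent_shiftMatrix b) (by simpa [M] using hne) hode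
  exact ⟨e, by push_cast; linear_combination -he⟩

theorem CongModZ.equivalence (K : ℕ) : Equivalence (CongModZ K) where
  refl p := ⟨0, by simp⟩
  symm := fun ⟨n, hn⟩ => ⟨-n, by rw [Int.cast_neg, map_neg]; linear_combination -hn⟩
  trans := fun ⟨n, hn⟩ ⟨m, hm⟩ => ⟨n + m, by rw [Int.cast_add, map_add]; linear_combination hn + hm⟩

namespace LinearMap

variable {R : Type*} [CommRing R] {ι κ : Type*} [DecidableEq ι]
  {M : ι → Type*} {N : κ → Type*} [∀ i, AddCommGroup (M i)] [∀ i, Module R (M i)]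
  [∀ j, AddCommGroup (N j)] [∀ j, Module R (N j)]

def block (Φ : ((i : ι) → M i) →ₗ[R] (j : κ) → N j) (j : κ) (i : ι) : M i →ₗ[R] N j :=
  proj j ∘ₗ Φ ∘ₗ single R M i

variable (Φ : ((i : ι) → M i) →ₗ[R] (j : κ) → N j)

theorem block_apply (j : κ) (i : ι) (v : M i) : Φ.block j i v = Φ (Pi.single i v) j := rfl

theorem apply_eq_sum_block [Fintype ι] (v : (i : ι) → M i) (j : κ) :
    Φ v j = ∑ i, Φ.block j i (v i) := by
  conv_lhs => rw [← Finset.univ_sum_single v, map_sum]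
  simp [block_apply]

theorem block_intertwine {D : ∀ i, M i → M i} {D' : ∀ j, N j → N j} (hD : ∀ i, D i 0 = 0)
    (h : ∀ v, Φ (fun i => D i (v i)) = fun j => D' j (Φ v j)) (j : κ) (i : ι) (v : M i) :
    Φ.block j i (D i v) = D' j (Φ.block j i v) := by
  rw [block_apply, block_apply, Pi.single_op D hD, h]

theorem exists_block_ne_zero_of_ker {x : R} (hker : ∀ v, Φ v = 0 → ∃ n : ℕ, x ^ n • v = 0)
    {i : ι} {v : M i} (hv : ∀ n : ℕ, x ^ n • v ≠ 0) : ∃ j, Φ.block j i ≠ 0 := by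
  by_contra! h
  obtain ⟨n, hn⟩ := hker (Pi.single i v) <| funext fun j => by
    rw [← block_apply, h j, zero_apply]; rfl
  exact hv n (by simpa using congrFun hn i)

theorem exists_block_ne_zero_of_range [Fintype ι] [DecidableEq κ] {x : R}
    (hsurj : ∀ w, ∃ (n : ℕ) (v : (i : ι) → M i), Φ v = x ^ n • w) {j : κ} {w : N j}
    (hw : ∀ n : ℕ, x ^ n • w ≠ 0) : ∃ i, Φ.block j i ≠ 0 := by
  by_contra! h
  obtain ⟨n, v, hv⟩ := hsurj (Pi.single j w)
  have hj := congrFun hv j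
  simp only [apply_eq_sum_block, h, zero_apply, Finset.sum_const_zero, Pi.smul_apply,
    Pi.single_eq_same] at hj
  exact hw n hj.symm

theorem injective_block {x : R} (hker : ∀ v, Φ v = 0 → ∃ n : ℕ, x ^ n • v = 0) {j : κ} {i : ι}
    (htf : ∀ (n : ℕ) (v : M i), x ^ n • v = 0 → v = 0) (h : ∀ j', j' ≠ j → Φ.block j' i = 0) :
    Function.Injective (Φ.block j i) := by
  rw [← ker_eq_bot, eq_bot_iff]
  intro v hv
  obtain ⟨n, hn⟩ := hker (Pi.single i v) <| funext fun j' => by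
    rcases eq_or_ne j' j with rfl | hj'
    · exact hv
    · rw [← block_apply, h j' hj', zero_apply]; rfl
  exact htf n v (by simpa using congrFun hn i)

theorem exists_block_apply_eq_pow_smul [Fintype ι] [DecidableEq κ] {x : R}
    (hsurj : ∀ w, ∃ (n : ℕ) (v : (i : ι) → M i), Φ v = x ^ n • w) {j : κ} {i : ι}
    (h : ∀ i', i' ≠ i → Φ.block j i' = 0) (w : N j) :
    ∃ (n : ℕ) (v : M i), Φ.block j i v = x ^ n • w := by
  obtain ⟨n, v, hv⟩ := hsurj (Pi.single j w)
  refine ⟨n, v i, ?_⟩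
  have hj := congrFun hv j
  rwa [apply_eq_sum_block, Finset.sum_eq_single i (fun i' _ hi' => by rw [h i' hi', zero_apply])
    (by simp), Pi.smul_apply, Pi.single_eq_same] at hj

end LinearMap

theorem card_eq_of_injective_of_forall_smul_mem_range {R : Type*} [CommRing R] [IsDomain R]
    {ι κ : Type*} [Fintype ι] [Fintype κ] [DecidableEq ι] [DecidableEq κ]
    {ψ : (ι → R) →ₗ[R] (κ → R)} (hinj : Function.Injective ψ)
    (hsurj : ∀ w, ∃ c ≠ (0 : R), ∃ v, ψ v = c • w) : Fintype.card ι = Fintype.card κ := by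
  apply le_antisymm
  · simpa using ((Pi.linearIndependent_single_one ι R).map' ψ
      (LinearMap.ker_eq_bot.mpr hinj)).fintype_card_le_finrank
  · choose c hc v hv using fun j : κ => hsurj (Pi.single j 1)
    have hψv : ψ ∘ v = fun j => Pi.single j (c j) := by
      ext j l
      simp [hv, Pi.single_apply]
    have hli : LinearIndependent R (ψ ∘ v) := hψv ▸ Pi.linearIndependent_single_of_ne_zero hc
    simpa using (LinearIndependent.of_comp ψ hli).fintype_card_le_finrank

theorem exists_equiv_of_rel_of_pairwise_not {ι κ α : Type*} {E : α → α → Prop}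
    (hE : Equivalence E) {f : ι → α} {g : κ → α} (hf : Pairwise fun i i' => ¬ E (f i) (f i'))
    (hg : Pairwise fun j j' => ¬ E (g j) (g j')) {r : ι → κ → Prop}
    (hr : ∀ i j, r i j → E (f i) (g j)) (hleft : ∀ i, ∃ j, r i j) (hright : ∀ j, ∃ i, r i j) :
    ∃ σ : ι ≃ κ, ∀ i j, r i j ↔ σ i = j := by
  choose σ hσ using hleft
  have hunique : ∀ i j, r i j → σ i = j := fun i j hij => by_contra fun hne =>
    hg hne (hE.trans (hE.symm (hr i _ (hσ i))) (hr i j hij))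
  have hinj : Function.Injective σ := fun i i' heq => by_contra fun hne =>
    hf hne (hE.trans (hr i _ (hσ i)) (heq ▸ hE.symm (hr i' _ (hσ i'))))
  have hsurj : Function.Surjective σ := fun j =>
    let ⟨i, hij⟩ := hright j
    ⟨i, hunique i j hij⟩
  exact ⟨.ofBijective σ ⟨hinj, hsurj⟩, fun i j => ⟨hunique i j, fun h => h ▸ hσ i⟩⟩

theorem hukuhara_turrittin_uniqueness_general (K s t : ℕ) (hK : 1 ≤ K)
    (ν : Fin s → PowerSeries ℂ) (μ : Fin t → PowerSeries ℂ)
    (hνbd : ∀ i k, K ≤ k → PowerSeries.coeff k (ν i) = 0)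
    (hμbd : ∀ j k, K ≤ k → PowerSeries.coeff k (μ j) = 0)
    (hνdist : ∀ i i', i ≠ i' → ¬ CongModZ K (ν i) (ν i'))
    (hμdist : ∀ j j', j ≠ j' → ¬ CongModZ K (μ j) (μ j'))
    (a : Fin s → ℕ) (b : Fin t → ℕ) (ha : ∀ i, 1 ≤ a i) (hb : ∀ j, 1 ≤ b j)
    (Φ : ((i : Fin s) → Fin (a i) → PowerSeries ℂ) →ₗ[PowerSeries ℂ]
        ((j : Fin t) → Fin (b j) → PowerSeries ℂ))
    (hcompat : ∀ g, Φ (fun i => vD K (ν i) (a i) (g i)) =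
      fun j => vD K (μ j) (b j) (Φ g j))
    (hker : ∀ v, Φ v = 0 → ∃ n : ℕ, ((PowerSeries.X : PowerSeries ℂ) ^ n) • v = 0)
    (hsurj : ∀ w, ∃ (n : ℕ) (v : (i : Fin s) → Fin (a i) → PowerSeries ℂ),
      Φ v = ((PowerSeries.X : PowerSeries ℂ) ^ n) • w) :
    s = t ∧ ∃ σ : Fin s ≃ Fin t, ∀ i, a i = b (σ i) ∧ CongModZ K (ν i) (μ (σ i)) := by
  have htf : ∀ {r : ℕ} (n : ℕ) (v : Fin r → ℂ⟦X⟧), (X : ℂ⟦X⟧) ^ n • v = 0 → v = 0 :=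
    fun n _ h => (smul_eq_zero.mp h).resolve_left (pow_ne_zero n X_ne_zero)
  have hone : ∀ {r : ℕ}, 1 ≤ r → ∀ n : ℕ, (X : ℂ⟦X⟧) ^ n • (fun _ : Fin r => (1 : ℂ⟦X⟧)) ≠ 0 :=
    fun hr n h => one_ne_zero (congrFun (htf n _ h) ⟨0, hr⟩)
  have hcong : ∀ i j, Φ.block j i ≠ 0 → CongModZ K (ν i) (μ j) := fun i j =>
    congModZ_of_intertwining hK (hνbd i) (hμbd j)
      (Φ.block_intertwine (fun i => vD_zero K (ν i) (a i)) hcompat j i)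
  obtain ⟨σ, hσ⟩ := exists_equiv_of_rel_of_pairwise_not (CongModZ.equivalence K) hνdist hμdist
    hcong (fun i => Φ.exists_block_ne_zero_of_ker hker (hone (ha i)))
    (fun j => Φ.exists_block_ne_zero_of_range hsurj (hone (hb j)))
  refine ⟨by simpa using Fintype.card_congr σ, σ, fun i => ⟨?_, hcong _ _ ((hσ _ _).mpr rfl)⟩⟩
  have hcol : ∀ j, j ≠ σ i → Φ.block j i = 0 := fun j hj =>
    not_not.mp fun h => hj ((hσ i j).mp h).symm
  have hrow : ∀ i', i' ≠ i → Φ.block (σ i) i' = 0 := fun i' hi' =>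
    not_not.mp fun h => hi' (σ.injective ((hσ i' _).mp h))
  simpa using card_eq_of_injective_of_forall_smul_mem_range (Φ.injective_block hker htf hcol)
    fun w => let ⟨n, v, hv⟩ := Φ.exists_block_apply_eq_pow_smul hsurj hrow w
      ⟨_, pow_ne_zero n X_ne_zero, v, hv⟩

/-- **Uniqueness of the Hukuhara–Turrittin invariants modulo `ℤ·dw/w`.**
If `⊕ᵢ V(νᵢ, aᵢ)` and `⊕ⱼ V(μⱼ, bⱼ)`, with the `νᵢ` pairwise distinct mod `ℤ·dw/w`
and the `μⱼ` pairwise distinct mod `ℤ·dw/w`, admit a `ℂ⟦w⟧`-linear map compatible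
with the connections which becomes an isomorphism after inverting `w`, then `s = t`
and there is a bijection `σ` with `aᵢ = b_{σ(i)}` and `νᵢ ≡ μ_{σ(i)} (mod ℤ·dw/w)`. -/
theorem hukuhara_turrittin_uniqueness (K s t : ℕ) (hK : 1 ≤ K)
    (hs : 1 ≤ s) (ht : 1 ≤ t)
    (ν : Fin s → PowerSeries ℂ) (μ : Fin t → PowerSeries ℂ)
    (hνbd : ∀ i k, K ≤ k → PowerSeries.coeff k (ν i) = 0)
    (hμbd : ∀ j k, K ≤ k → PowerSeries.coeff k (μ j) = 0)
    (hνdist : ∀ i i', i ≠ i' → ¬ CongModZ K (ν i) (ν i'))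
    (hμdist : ∀ j j', j ≠ j' → ¬ CongModZ K (μ j) (μ j'))
    (a : Fin s → ℕ) (b : Fin t → ℕ) (ha : ∀ i, 1 ≤ a i) (hb : ∀ j, 1 ≤ b j)
    (Φ : ((i : Fin s) → Fin (a i) → PowerSeries ℂ) →ₗ[PowerSeries ℂ]
        ((j : Fin t) → Fin (b j) → PowerSeries ℂ))
    (hcompat : ∀ g, Φ (fun i => vD K (ν i) (a i) (g i)) =
      fun j => vD K (μ j) (b j) (Φ g j))
    (hker : ∀ v, Φ v = 0 → ∃ n : ℕ, ((PowerSeries.X : PowerSeries ℂ) ^ n) • v = 0)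
    (hsurj : ∀ w, ∃ (n : ℕ) (v : (i : Fin s) → Fin (a i) → PowerSeries ℂ),
      Φ v = ((PowerSeries.X : PowerSeries ℂ) ^ n) • w) :
    s = t ∧ ∃ σ : Fin s ≃ Fin t, ∀ i, a i = b (σ i) ∧ CongModZ K (ν i) (μ (σ i)) :=
  hukuhara_turrittin_uniqueness_general K s t hK ν μ hνbd hμbd hνdist hμdist a b ha hb Φ hcompat
    hker hsurj
end
end

section
/- Let m ≥ 1, let p ∈ ℂ[X] be a nonzero polynomial of degree ≤ m−1, and let c ∈ ℂ[[z]] be a nonzero formal power series of order k (i.e. c = c_k z^k + (higher order terms) with c_k ≠ 0). If the identity z^m·(dc/dz) = c·p(z) holds in ℂ[[z]], then p = k·X^{m−1} (so in particular k is determined as the unique nonzero coefficient of p), and moreover c = c_k·z^k is a monomial. -/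
noncomputable section

/-! The Euler operator `X · d/dX` acts on the coefficient of `X^n` as multiplication by `n`, so
`X^m c' = c p` reads `X^(m-1) · (X c') = c p`. Comparing orders, `X^(m-1)` divides `p`, and as
`deg p ≤ m - 1` this forces `p = a X^(m-1)`. Cancelling `X^(m-1)` leaves `X c' = a c`, i.e.
`n c_n = a c_n` for all `n`: hence `a = k` and `c_n = 0` for `n ≠ k`. -/

open PowerSeries

theorem Polynomial.eq_C_mul_X_pow_of_coeff_eq_zero {R : Type*} [Semiring R] {p : Polynomial R}
    {n : ℕ} (hdeg : p.natDegree ≤ n) (hlow : ∀ i < n, p.coeff i = 0) :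
    p = Polynomial.C (p.coeff n) * Polynomial.X ^ n := by
  ext i
  rw [Polynomial.coeff_C_mul_X_pow]
  split_ifs with hi
  · rw [hi]
  · rcases Nat.lt_or_gt_of_ne hi with hlt | hgt
    · exact hlow i hlt
    · exact Polynomial.coeff_eq_zero_of_natDegree_lt (hdeg.trans_lt hgt)

theorem PowerSeries.le_order_of_X_pow_mul_eq_mul {R : Type*} [CommRing R] [IsDomain R]
    {f g q : R⟦X⟧} (n : ℕ) (hf : f.order ≠ ⊤) (hfg : f.order ≤ g.order)
    (h : X ^ n * g = f * q) : n ≤ q.order := by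
  have hle : f.order + n ≤ f.order + q.order := by
    calc f.order + n ≤ n + g.order := by rw [add_comm]; gcongr
      _ = f.order + q.order := by rw [← order_X_pow (R := R) n, ← order_mul, h, order_mul]
  exact (ENat.add_le_add_iff_left hf).mp hle

theorem coeff_X_mul_psDeriv (f : ℂ⟦X⟧) (n : ℕ) :
    coeff n (X * psDeriv f) = n * coeff n f := by
  cases n with
  | zero => simp
  | succ n => simp [psDeriv, coeff_succ_X_mul]

theorem order_le_order_X_mul_psDeriv (f : ℂ⟦X⟧) : f.order ≤ (X * psDeriv f).order :=
  le_order _ _ fun i hi => by rw [coeff_X_mul_psDeriv, coeff_of_lt_order i hi, mul_zero]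

theorem eq_monomial_of_X_mul_psDeriv_eq_C_mul {c : ℂ⟦X⟧} {a : ℂ} {k : ℕ}
    (hck : coeff k c ≠ 0) (h : X * psDeriv c = C a * c) :
    a = k ∧ c = monomial k (coeff k c) := by
  have hcoeff (n : ℕ) : (n - a) * coeff n c = 0 := by
    rw [sub_mul, ← coeff_X_mul_psDeriv, h, coeff_C_mul, sub_self]
  have ha : a = k := (sub_eq_zero.mp ((mul_eq_zero.mp (hcoeff k)).resolve_right hck)).symm
  refine ⟨ha, ext fun n => ?_⟩
  rw [coeff_monomial]
  split_ifs with hn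
  · rw [hn]
  · refine (mul_eq_zero.mp (hcoeff n)).resolve_left ?_
    rw [ha, sub_eq_zero]
    exact_mod_cast hn

theorem polar_rank_one_rigidity_general (m k : ℕ) (hm : 1 ≤ m)
    (p : Polynomial ℂ) (hdeg : p.natDegree ≤ m - 1)
    (c : PowerSeries ℂ)
    (hck : PowerSeries.coeff k c ≠ 0)
    (hlow : ∀ j < k, PowerSeries.coeff j c = 0)
    (heq : (PowerSeries.X : PowerSeries ℂ) ^ m * psDeriv c = c * (p : PowerSeries ℂ)) :
    p = Polynomial.C (k : ℂ) * Polynomial.X ^ (m - 1) ∧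
    c = (PowerSeries.monomial k) (PowerSeries.coeff k c) := by
  obtain ⟨N, rfl⟩ : ∃ N, m = N + 1 := ⟨m - 1, by omega⟩
  rw [Nat.add_sub_cancel] at hdeg ⊢
  have hc : c.order = k := order_eq_nat.mpr ⟨hck, hlow⟩
  have heq' : X ^ N * (X * psDeriv c) = c * (p : ℂ⟦X⟧) := by rw [← mul_assoc, ← pow_succ, heq]
  obtain ⟨a, rfl⟩ : ∃ a, p = Polynomial.C a * Polynomial.X ^ N := by
    have hord := le_order_of_X_pow_mul_eq_mul N (by simp [hc])
      (order_le_order_X_mul_psDeriv c) heq'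
    refine ⟨_, Polynomial.eq_C_mul_X_pow_of_coeff_eq_zero hdeg fun i hi => ?_⟩
    rw [← Polynomial.coeff_coe]
    exact coeff_of_lt_order i (lt_of_lt_of_le (by exact_mod_cast hi) hord)
  have heuler : X * psDeriv c = C a * c := by
    refine mul_left_cancel₀ (pow_ne_zero N X_ne_zero) ?_
    rw [heq']
    simp only [Polynomial.coe_mul, Polynomial.coe_C, Polynomial.coe_pow, Polynomial.coe_X]
    ring
  obtain ⟨ha, hmono⟩ := eq_monomial_of_X_mul_psDeriv_eq_C_mul hck heuler
  exact ⟨by rw [ha], hmono⟩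

/-- Let `p ∈ ℂ[X]` be a nonzero polynomial of degree `≤ m - 1` and let `c ∈ ℂ⟦z⟧`
be nonzero of order `k`. If `z^m·(dc/dz) = c·p(z)` in `ℂ⟦z⟧` then
`p = k·X^{m-1}` and `c = c_k·z^k` is a monomial. -/
theorem polar_rank_one_rigidity (m k : ℕ) (hm : 1 ≤ m)
    (p : Polynomial ℂ) (hp : p ≠ 0) (hdeg : p.natDegree ≤ m - 1)
    (c : PowerSeries ℂ)
    (hck : PowerSeries.coeff k c ≠ 0)
    (hlow : ∀ j < k, PowerSeries.coeff j c = 0)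
    (heq : (PowerSeries.X : PowerSeries ℂ) ^ m * psDeriv c = c * (p : PowerSeries ℂ)) :
    p = Polynomial.C (k : ℂ) * Polynomial.X ^ (m - 1) ∧
    c = (PowerSeries.monomial k) (PowerSeries.coeff k c) :=
  polar_rank_one_rigidity_general m k hm p hdeg c hck hlow heq
end
end

section
/- Let N ≥ m ≥ 1 and let p ∈ ℂ[X] be a nonzero polynomial of degree ≤ m−1 whose lowest nonzero coefficient sits in degree m−n, where 1 ≤ n ≤ m. Let c ∈ ℂ[[X]] satisfy the congruence X^m·(dc/dX) ≡ c·p (mod X^N). If c ≢ 0 (mod X^{N−m+n}), then n = 1 (so p = α·X^{m−1} for a single nonzero α ∈ ℂ) and α equals the order of c (a nonnegative integer). In particular, if m ≥ 2 and the constant term p(0) ≠ 0, then necessarily c ≡ 0 (mod X^N). -/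
/-
Compare the coefficients of `X^(k + m - n)` on both sides, `k` being the order of `c`: the
right-hand side is `c_k · p_{m-n} ≠ 0`, while `X^m · c'` only has coefficients
`(j + 1) c_{j+1}` in degree `j + m`, which vanish below degree `k - 1 + m`. Hence
`m - n ≥ m - 1`, i.e. `n = 1`, and then the coefficient of `X^(k + m - 1)` reads
`k c_k = c_k p_{m-1}`. If `p(0) ≠ 0` then `n = m`, so for `m ≥ 2` the case `c ≢ 0 mod X^N`
is excluded.
-/

noncomputable section

namespace PowerSeries

open Finset.HasAntidiagonal

theorem coeff_eq_of_X_pow_dvd_sub {R : Type*} [Ring R] {N i : ℕ} {f g : R⟦X⟧}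
    (h : X ^ N ∣ f - g) (hi : i < N) : coeff i f = coeff i g :=
  sub_eq_zero.mp (by simpa only [map_sub] using X_pow_dvd_iff.mp h i hi)

theorem coeff_add_mul_of_coeff_lt {R : Type*} [Semiring R] {a b : ℕ} {f g : R⟦X⟧}
    (hf : ∀ i < a, coeff i f = 0) (hg : ∀ j < b, coeff j g = 0) :
    coeff (a + b) (f * g) = coeff a f * coeff b g := by
  rw [coeff_mul, Finset.sum_eq_single_of_mem (a, b) (mem_antidiagonal.mpr rfl)]
  rintro ⟨i, j⟩ hij hne
  rw [mem_antidiagonal] at hij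
  rcases lt_or_ge i a with hi | hi
  · rw [hf i hi, zero_mul]
  · have hj : j < b := by
      by_contra! hj
      exact hne (Prod.ext (by omega) (by omega))
    rw [hg j hj, mul_zero]

end PowerSeries

open PowerSeries

theorem coeff_X_pow_mul_psDeriv_of_lt {m k i : ℕ} {c : ℂ⟦X⟧} (hc : ∀ j < k, coeff j c = 0)
    (hi : i + 1 < m + k) : coeff i (X ^ m * psDeriv c) = 0 := by
  rw [coeff_X_pow_mul']
  split_ifs
  · rw [psDeriv, coeff_mk, hc _ (by omega), mul_zero]
  · rfl

theorem coeff_add_pred_X_pow_mul_psDeriv {m : ℕ} (hm : 1 ≤ m) (k : ℕ) (c : ℂ⟦X⟧) :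
    coeff (k + (m - 1)) (X ^ m * psDeriv c) = k * coeff k c := by
  cases k with
  | zero => rw [Nat.cast_zero, zero_mul, zero_add, coeff_X_pow_mul', if_neg (by omega)]
  | succ j =>
    rw [show j + 1 + (m - 1) = j + m by omega, coeff_X_pow_mul, psDeriv, coeff_mk]
    push_cast
    rfl

theorem eq_one_and_coeff_eq_order_of_X_pow_dvd_sub {N m n : ℕ} (hN : m ≤ N) (hn1 : 1 ≤ n)
    (hnm : n ≤ m) {p : Polynomial ℂ} (hlow : p.coeff (m - n) ≠ 0)
    (hlow' : ∀ j < m - n, p.coeff j = 0) {c : ℂ⟦X⟧}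
    (hcong : X ^ N ∣ X ^ m * psDeriv c - c * (p : ℂ⟦X⟧)) (hc : ¬ X ^ (N - m + n) ∣ c) :
    n = 1 ∧ p.coeff (m - 1) = c.order.toNat := by
  set k := c.order.toNat
  have hck : coeff k c ≠ 0 := coeff_order fun h => hc (h ▸ dvd_zero _)
  have hkN : k < N - m + n := by
    by_contra! h
    exact hc ((pow_dvd_pow X h).trans X_pow_order_dvd)
  have hc_low : ∀ j < k, coeff j c = 0 := fun j => coeff_of_lt_order_toNat j
  have hlead : coeff (k + (m - n)) (X ^ m * psDeriv c) = coeff k c * p.coeff (m - n) := by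
    rw [coeff_eq_of_X_pow_dvd_sub hcong (by omega), ← Polynomial.coeff_coe,
      coeff_add_mul_of_coeff_lt hc_low (by simpa only [Polynomial.coeff_coe] using hlow')]
  obtain rfl : n = 1 := by
    by_contra hn
    rw [coeff_X_pow_mul_psDeriv_of_lt hc_low (by omega)] at hlead
    exact mul_ne_zero hck hlow hlead.symm
  refine ⟨rfl, mul_left_cancel₀ hck ?_⟩
  rw [← hlead, coeff_add_pred_X_pow_mul_psDeriv hnm, mul_comm]

theorem truncated_polar_rigidity_general (N m n : ℕ) (hN : m ≤ N)
    (hn1 : 1 ≤ n) (hnm : n ≤ m)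
    (p : Polynomial ℂ)
    (hlow : p.coeff (m - n) ≠ 0) (hlow' : ∀ j < m - n, p.coeff j = 0)
    (c : PowerSeries ℂ)
    (hcong : ((PowerSeries.X : PowerSeries ℂ) ^ N) ∣
      ((PowerSeries.X : PowerSeries ℂ) ^ m * psDeriv c - c * (p : PowerSeries ℂ))) :
    (¬ ((PowerSeries.X : PowerSeries ℂ) ^ (N - m + n) ∣ c) →
      n = 1 ∧ ∃ k : ℕ, (∀ j < k, PowerSeries.coeff j c = 0) ∧
        PowerSeries.coeff k c ≠ 0 ∧ p.coeff (m - 1) = (k : ℂ)) ∧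
    (2 ≤ m → p.coeff 0 ≠ 0 → (PowerSeries.X : PowerSeries ℂ) ^ N ∣ c) := by
  have rigid := eq_one_and_coeff_eq_order_of_X_pow_dvd_sub hN hn1 hnm hlow hlow' hcong
  refine ⟨fun hc => ?_, fun hm2 hp0 => ?_⟩
  · obtain ⟨hn, hres⟩ := rigid hc
    exact ⟨hn, c.order.toNat, fun j => coeff_of_lt_order_toNat j,
      coeff_order fun h => hc (h ▸ dvd_zero _), hres⟩
  · have hn : n = m := by
      by_contra
      exact hp0 (hlow' 0 (by omega))
    by_contra hc
    have := (rigid (by rwa [show N - m + n = N by omega])).1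
    omega

/-- Let `N ≥ m ≥ 1` and let `p ∈ ℂ[X]` be nonzero of degree `≤ m - 1` whose lowest
nonzero coefficient sits in degree `m - n` (with `1 ≤ n ≤ m`). Suppose
`c ∈ ℂ⟦X⟧` satisfies `X^m·(dc/dX) ≡ c·p (mod X^N)`. If `c ≢ 0 (mod X^{N-m+n})`,
then `n = 1` (so `p = α·X^{m-1}` with `α ≠ 0`) and `α = p.coeff (m-1)` equals the
order `k` of `c`, a nonnegative integer. In particular, if `m ≥ 2` and the constant
term `p(0) ≠ 0`, then necessarily `c ≡ 0 (mod X^N)`. -/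
theorem truncated_polar_rigidity (N m n : ℕ) (hm : 1 ≤ m) (hN : m ≤ N)
    (hn1 : 1 ≤ n) (hnm : n ≤ m)
    (p : Polynomial ℂ) (hp : p ≠ 0) (hdeg : p.natDegree ≤ m - 1)
    (hlow : p.coeff (m - n) ≠ 0) (hlow' : ∀ j < m - n, p.coeff j = 0)
    (c : PowerSeries ℂ)
    (hcong : ((PowerSeries.X : PowerSeries ℂ) ^ N) ∣
      ((PowerSeries.X : PowerSeries ℂ) ^ m * psDeriv c - c * (p : PowerSeries ℂ))) :
    (¬ ((PowerSeries.X : PowerSeries ℂ) ^ (N - m + n) ∣ c) →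
      n = 1 ∧ ∃ k : ℕ, (∀ j < k, PowerSeries.coeff j c = 0) ∧
        PowerSeries.coeff k c ≠ 0 ∧ p.coeff (m - 1) = (k : ℂ)) ∧
    (2 ≤ m → p.coeff 0 ≠ 0 → (PowerSeries.X : PowerSeries ℂ) ^ N ∣ c) :=
  truncated_polar_rigidity_general N m n hN hn1 hnm p hlow hlow' c hcong
end
end

section
/- Let m ≥ 2 and N ≥ m. Let p_j = a_{j,0} + a_{j,1}z + ⋯ + a_{j,m−1}z^{m−1} ∈ ℂ[z] for 0 ≤ j ≤ r−1, encoding the polar forms ν_j = p_j·dz/z^m, and assume the leading coefficients a_{0,0},…,a_{r−1,0} are pairwise distinct. Let (V,∇) = V(ν_{r−1},1) ⊕ V(ν_{r−2},1) ⊕ ⋯ ⊕ V(ν_0,1), a free ℂ[[z]]-module of rank r with connection of pole order m, let V_N := V/z^NV with the induced operator D_N (satisfying D_N(a·v) = (z^m·da/dz)·v + a·D_N(v) for a ∈ ℂ[z]/(z^N)). Then there is exactly one filtration V_N = l_0 ⊃ l_1 ⊃ ⋯ ⊃ l_{r−1} ⊃ l_r = 0 by ℂ[z]/(z^N)-submodules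 such that each l_j/l_{j+1} is free of rank 1, D_N(l_j) ⊆ l_j for all j, and for each j the induced map on l_j/l_{j+1} minus multiplication by p_j takes values in z^m·(l_j/l_{j+1}); namely, l_j is the image of V(ν_{r−1},1) ⊕ ⋯ ⊕ V(ν_j,1) in V_N. -/
/-!
Existence is a coordinatewise check. Uniqueness goes by induction on `j`, assuming `l j` is the
canonical step. For `t > j` the basis vector `e_t` lies in `l j` and `D e_t = p_t e_t`. Since the
constant terms of `p_t` and `p_j` differ, `p_t - p_j` is a unit, so the parabolic condition turns
`(D - p_t) h ∈ l (j+1)` into `h ∈ z^m·l j + l (j+1)`. Applying `D - p_t` to `z^k h` only costs a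
factor `z^(m-1)` with `m ≥ 2`, so iterating puts `e_t` in `z^k·l j + l (j+1)` for every `k`, hence in
`z^N·V + l (j+1) = l (j+1)`. This shows the canonical `(j+1)`-st step is contained in `l (j+1)`.
Conversely, for `u ∈ l (j+1)` and the generator `e` of the `j`-th graded piece, `u_j e - e_j u` is
canonical, so `u_j e ∈ l (j+1)` and freeness of the graded piece gives `z^N ∣ u_j`.
-/

noncomputable section

/-- The connection of pole order `m` on `V = V(ν_{r-1},1) ⊕ ⋯ ⊕ V(ν_0,1)`
(coordinate `i` carrying the polar form `ν_i = p_i·dz/z^m`), written in the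
trivialization by the generator `dz/z^m`. -/
def diagD (r m : ℕ) (p : ℕ → PowerSeries ℂ)
    (g : Fin r → PowerSeries ℂ) : Fin r → PowerSeries ℂ := fun i =>
  (PowerSeries.X : PowerSeries ℂ) ^ m * psDeriv (g i) + p (i : ℕ) * g i

/-- The preimage in `V` of the image of `V(ν_{r-1},1) ⊕ ⋯ ⊕ V(ν_j,1)` in
`V_N = V/z^N V`: the coordinates `i < j` are divisible by `z^N`. For `j = r`
this is `z^N·V`, i.e. the zero submodule of `V_N`. -/
def canonFilt (r N j : ℕ) : Submodule (PowerSeries ℂ) (Fin r → PowerSeries ℂ) :=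
  Submodule.pi Set.univ fun i : Fin r =>
    if (i : ℕ) < j then
      (Ideal.span {(PowerSeries.X : PowerSeries ℂ) ^ N} : Ideal (PowerSeries ℂ))
    else ⊤

/-- The conditions on a filtration `V_N = l̄ 0 ⊃ l̄ 1 ⊃ ⋯ ⊃ l̄ r = 0` of
`V_N = V/z^N V` (given by its preimages `l j ⊇ z^N·V` in `V`): each graded piece
`l̄ j / l̄ (j+1)` is free of rank one over `ℂ[z]/(z^N)`, each `l̄ j` is stable
under the induced operator `D_N`, and on the `j`-th graded piece the induced map
minus multiplication by `p j` takes values in `z^m·(l̄ j / l̄ (j+1))`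
(the `ν`-parabolic condition of depth `N`). -/
def IsDeepParabolicFiltration (r m N : ℕ) (p : ℕ → PowerSeries ℂ)
    (l : ℕ → Submodule (PowerSeries ℂ) (Fin r → PowerSeries ℂ)) : Prop :=
  l 0 = ⊤ ∧ l r = canonFilt r N r ∧
  (∀ j < r, l (j + 1) ≤ l j) ∧
  (∀ j < r, ∀ v ∈ l j, diagD r m p v ∈ l j) ∧
  (∀ j < r, ∃ e ∈ l j,
    l j = Submodule.span (PowerSeries ℂ) {e} ⊔ l (j + 1) ∧
    ∀ a : PowerSeries ℂ, a • e ∈ l (j + 1) → (PowerSeries.X : PowerSeries ℂ) ^ N ∣ a) ∧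
  (∀ j < r, ∀ v ∈ l j, ∃ w ∈ l j,
    diagD r m p v - p j • v - ((PowerSeries.X : PowerSeries ℂ) ^ m) • w ∈ l (j + 1))

open PowerSeries

lemma psDeriv_eq_derivative_s10 : psDeriv = derivative ℂ := by
  funext f; ext n; simp [psDeriv, coeff_derivative, mul_comm]

lemma X_pow_dvd_X_pow_mul_psDeriv {m N : ℕ} (hm : 1 ≤ m) {f : ℂ⟦X⟧} (hf : X ^ N ∣ f) :
    (X : ℂ⟦X⟧) ^ N ∣ X ^ m * psDeriv f := by
  obtain ⟨g, rfl⟩ := hf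
  obtain ⟨m, rfl⟩ := Nat.exists_eq_add_of_le' hm
  rcases N with _ | N
  · simp
  · refine ⟨(N + 1 : ℂ⟦X⟧) * X ^ m * g + X ^ (m + 1) * derivative ℂ g, ?_⟩
    simp only [psDeriv_eq_derivative_s10, Derivation.leibniz, smul_eq_mul, Derivation.leibniz_pow,
      add_tsub_cancel_right, derivative_X, mul_one, nsmul_eq_mul, Nat.cast_add, Nat.cast_one]
    ring

section diagD
variable {r m : ℕ} {p : ℕ → ℂ⟦X⟧}

lemma diagD_sub (u v : Fin r → ℂ⟦X⟧) :
    diagD r m p (u - v) = diagD r m p u - diagD r m p v := by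
  funext i
  simp only [diagD, psDeriv_eq_derivative_s10, Pi.sub_apply, map_sub]
  ring

lemma diagD_smul (a : ℂ⟦X⟧) (v : Fin r → ℂ⟦X⟧) :
    diagD r m p (a • v) = (X ^ m * psDeriv a) • v + a • diagD r m p v := by
  funext i
  simp only [diagD, psDeriv_eq_derivative_s10, Pi.smul_apply, smul_eq_mul, Derivation.leibniz,
    Pi.add_apply]
  ring

lemma diagD_single (t : Fin r) :
    diagD r m p (Pi.single t 1) = p t • Pi.single t 1 := by
  funext i
  rcases eq_or_ne i t with rfl | h
  · simp [diagD, psDeriv_eq_derivative_s10]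
  · simp [diagD, h, psDeriv_eq_derivative_s10]

end diagD

section canonFilt
variable {r N j : ℕ}

lemma mem_canonFilt {v : Fin r → ℂ⟦X⟧} :
    v ∈ canonFilt r N j ↔ ∀ i : Fin r, (i : ℕ) < j → (X : ℂ⟦X⟧) ^ N ∣ v i := by
  simp only [canonFilt, Submodule.mem_pi, Set.mem_univ, true_implies]
  refine forall_congr' fun i => ?_
  split_ifs with h <;> simp [h, Ideal.mem_span_singleton]

lemma mem_canonFilt_succ {i : Fin r} (hi : (i : ℕ) = j) {v : Fin r → ℂ⟦X⟧} :
    v ∈ canonFilt r N (j + 1) ↔ v ∈ canonFilt r N j ∧ (X : ℂ⟦X⟧) ^ N ∣ v i := by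
  simp only [mem_canonFilt]
  refine ⟨fun h => ⟨fun k hk => h k (by omega), h i (by omega)⟩, fun ⟨h, hvi⟩ k hk => ?_⟩
  rcases Nat.lt_succ_iff_lt_or_eq.mp hk with hk | hk
  · exact h k hk
  · rwa [Fin.ext (hk.trans hi.symm)]

lemma canonFilt_antitone (r N : ℕ) : Antitone (canonFilt r N) :=
  fun _ _ hjk _ hv => mem_canonFilt.mpr fun i hi => mem_canonFilt.mp hv i (by omega)

lemma canonFilt_zero : canonFilt r N 0 = ⊤ :=
  eq_top_iff.mpr fun _ _ => mem_canonFilt.mpr fun _ hi => absurd hi (Nat.not_lt_zero _)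

lemma X_pow_smul_mem_canonFilt (v : Fin r → ℂ⟦X⟧) : (X : ℂ⟦X⟧) ^ N • v ∈ canonFilt r N j :=
  mem_canonFilt.mpr fun _ _ => dvd_mul_right _ _

lemma single_mem_canonFilt {t : Fin r} (ht : j ≤ t) (a : ℂ⟦X⟧) :
    Pi.single t a ∈ canonFilt r N j :=
  mem_canonFilt.mpr fun i hi => by
    simp [Fin.ne_of_lt (Fin.lt_def.mpr (lt_of_lt_of_le hi ht))]

lemma canonFilt_le_of_single_mem {L : Submodule ℂ⟦X⟧ (Fin r → ℂ⟦X⟧)}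
    (hXN : ∀ v, (X : ℂ⟦X⟧) ^ N • v ∈ L) (hsingle : ∀ t : Fin r, j ≤ t → Pi.single t 1 ∈ L) :
    canonFilt r N j ≤ L := by
  intro v hv
  rw [← Finset.univ_sum_single v]
  refine L.sum_mem fun i _ => ?_
  by_cases hi : j ≤ i
  · simpa [← Pi.single_smul'] using L.smul_mem (v i) (hsingle i hi)
  · obtain ⟨a, ha⟩ := mem_canonFilt.mp hv i (by omega)
    simpa [ha, ← Pi.single_smul'] using hXN (Pi.single i a)

lemma diagD_mem_canonFilt {m : ℕ} (hm : 1 ≤ m) (p : ℕ → ℂ⟦X⟧) {v : Fin r → ℂ⟦X⟧}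
    (hv : v ∈ canonFilt r N j) : diagD r m p v ∈ canonFilt r N j :=
  mem_canonFilt.mpr fun i hi =>
    dvd_add (X_pow_dvd_X_pow_mul_psDeriv hm (mem_canonFilt.mp hv i hi))
      ((mem_canonFilt.mp hv i hi).mul_left _)

lemma canonFilt_eq_span_single_sup {t : Fin r} (ht : (t : ℕ) = j) :
    canonFilt r N j = Submodule.span ℂ⟦X⟧ {Pi.single t 1} ⊔ canonFilt r N (j + 1) := by
  refine le_antisymm (canonFilt_le_of_single_mem
    (fun v => Submodule.mem_sup_right (X_pow_smul_mem_canonFilt v)) fun s hs => ?_) ?_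
  · rcases Nat.lt_or_eq_of_le hs with hs | hs
    · exact Submodule.mem_sup_right (single_mem_canonFilt hs 1)
    · rw [Fin.ext (hs.symm.trans ht.symm)]
      exact Submodule.mem_sup_left (Submodule.mem_span_singleton_self _)
  · exact sup_le ((Submodule.span_singleton_le_iff_mem _ _).mpr
      (single_mem_canonFilt ht.ge 1)) (canonFilt_antitone r N j.le_succ)

end canonFilt

lemma isDeepParabolicFiltration_canonFilt {r m N : ℕ} (hm : 1 ≤ m) (p : ℕ → ℂ⟦X⟧) :
    IsDeepParabolicFiltration r m N p (canonFilt r N) := by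
  refine ⟨canonFilt_zero, rfl, fun j _ => canonFilt_antitone r N j.le_succ,
    fun j _ v hv => diagD_mem_canonFilt hm p hv, fun j hj => ?_, fun j hj v hv => ?_⟩
  all_goals set t : Fin r := ⟨j, hj⟩
  · refine ⟨Pi.single t 1, single_mem_canonFilt (t := t) le_rfl 1,
      canonFilt_eq_span_single_sup rfl, fun a ha => ?_⟩
    simpa using ((mem_canonFilt_succ (i := t) rfl).mp ha).2
  · refine ⟨Pi.single t (psDeriv (v t)), single_mem_canonFilt (t := t) le_rfl _,
      (mem_canonFilt_succ (i := t) rfl).mpr ⟨?_, ?_⟩⟩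
    · exact sub_mem (sub_mem (diagD_mem_canonFilt hm p hv) (Submodule.smul_mem _ _ hv))
        (Submodule.smul_mem _ _ (single_mem_canonFilt (t := t) le_rfl _))
    · simp [diagD, t]

section Eigenvector
variable {r m : ℕ} {p : ℕ → ℂ⟦X⟧} {L L' : Submodule ℂ⟦X⟧ (Fin r → ℂ⟦X⟧)} {c d : ℂ⟦X⟧}

lemma exists_X_pow_succ_smul_sub_mem (hm : 2 ≤ m)
    (hpar : ∀ v ∈ L, ∃ w ∈ L, diagD r m p v - c • v - (X : ℂ⟦X⟧) ^ m • w ∈ L')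
    (hdc : IsUnit (d - c)) {k : ℕ} {h : Fin r → ℂ⟦X⟧} (hh : h ∈ L)
    (hDh : diagD r m p ((X : ℂ⟦X⟧) ^ k • h) - d • (X : ℂ⟦X⟧) ^ k • h ∈ L') :
    ∃ h' ∈ L, (X : ℂ⟦X⟧) ^ k • h - (X : ℂ⟦X⟧) ^ (k + 1) • h' ∈ L' := by
  obtain ⟨q, hq⟩ := hdc.exists_left_inv
  obtain ⟨w, hw, hpar⟩ := hpar h hh
  obtain ⟨m, rfl⟩ := Nat.exists_eq_add_of_le' hm
  -- `m ≥ 2` makes the derivative term `k z^(k+m-1) h` divisible by `z^(k+1)`.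
  have hXk : (X : ℂ⟦X⟧) ^ (m + 2) * psDeriv ((X : ℂ⟦X⟧) ^ k) =
      X ^ (k + 1) * ((k : ℂ⟦X⟧) * X ^ m) := by
    rcases k with _ | k
    · simp [psDeriv_eq_derivative_s10]
    · simp only [psDeriv_eq_derivative_s10, Derivation.leibniz_pow, add_tsub_cancel_right,
        derivative_X, smul_eq_mul, mul_one, nsmul_eq_mul, Nat.cast_add, Nat.cast_one]
      ring
  refine ⟨q • (((k : ℂ⟦X⟧) * X ^ m) • h + (X : ℂ⟦X⟧) ^ (m + 1) • w),
    L.smul_mem q (L.add_mem (L.smul_mem _ hh) (L.smul_mem _ hw)), ?_⟩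
  convert L'.smul_mem q (L'.sub_mem (L'.smul_mem ((X : ℂ⟦X⟧) ^ k) hpar) hDh) using 1
  rw [diagD_smul, hXk]
  funext i
  simp only [Pi.sub_apply, Pi.add_apply, Pi.smul_apply, smul_eq_mul]
  linear_combination (-(X : ℂ⟦X⟧) ^ k * h i) * hq

lemma exists_X_pow_smul_sub_mem (hm : 2 ≤ m) (hL' : ∀ u ∈ L', diagD r m p u ∈ L')
    (hpar : ∀ v ∈ L, ∃ w ∈ L, diagD r m p v - c • v - (X : ℂ⟦X⟧) ^ m • w ∈ L')
    (hdc : IsUnit (d - c)) (k : ℕ) {v : Fin r → ℂ⟦X⟧} (hv : v ∈ L)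
    (hDv : diagD r m p v - d • v ∈ L') : ∃ h ∈ L, v - (X : ℂ⟦X⟧) ^ k • h ∈ L' := by
  induction k with
  | zero => exact ⟨v, hv, by simp⟩
  | succ k ih =>
    obtain ⟨h, hh, hu⟩ := ih
    have hDh : diagD r m p ((X : ℂ⟦X⟧) ^ k • h) - d • (X : ℂ⟦X⟧) ^ k • h ∈ L' := by
      convert L'.sub_mem hDv (L'.sub_mem (hL' _ hu) (L'.smul_mem d hu)) using 1
      rw [diagD_sub, smul_sub]
      abel
    obtain ⟨h', hh', hu'⟩ := exists_X_pow_succ_smul_sub_mem hm hpar hdc hh hDh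
    exact ⟨h', hh', by simpa using L'.add_mem hu hu'⟩

lemma mem_of_diagD_sub_smul_mem {N : ℕ} (hm : 2 ≤ m) (hL' : ∀ u ∈ L', diagD r m p u ∈ L')
    (hpar : ∀ v ∈ L, ∃ w ∈ L, diagD r m p v - c • v - (X : ℂ⟦X⟧) ^ m • w ∈ L')
    (hdc : IsUnit (d - c)) (hXN : ∀ v, (X : ℂ⟦X⟧) ^ N • v ∈ L') {v : Fin r → ℂ⟦X⟧}
    (hv : v ∈ L) (hDv : diagD r m p v - d • v ∈ L') : v ∈ L' := by
  obtain ⟨h, -, hu⟩ := exists_X_pow_smul_sub_mem hm hL' hpar hdc N hv hDv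
  simpa using L'.add_mem hu (hXN h)

end Eigenvector

namespace IsDeepParabolicFiltration
variable {r m N : ℕ} {p : ℕ → ℂ⟦X⟧} {l : ℕ → Submodule ℂ⟦X⟧ (Fin r → ℂ⟦X⟧)}

lemma le_of_le (hl : IsDeepParabolicFiltration r m N p l) {j k : ℕ} (hjk : j ≤ k)
    (hk : k ≤ r) : l k ≤ l j := by
  induction k, hjk using Nat.le_induction with
  | base => exact le_rfl
  | succ k _ ih => exact (hl.2.2.1 k (by omega)).trans (ih (by omega))

lemma X_pow_smul_mem (hl : IsDeepParabolicFiltration r m N p l) {j : ℕ} (hj : j ≤ r)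
    (v : Fin r → ℂ⟦X⟧) : (X : ℂ⟦X⟧) ^ N • v ∈ l j :=
  hl.le_of_le hj le_rfl (hl.2.1 ▸ X_pow_smul_mem_canonFilt v)

lemma canonFilt_succ_le (hm : 2 ≤ m)
    (hdist : ∀ j₁ < r, ∀ j₂ < r, j₁ ≠ j₂ → constantCoeff (p j₁) ≠ constantCoeff (p j₂))
    (hl : IsDeepParabolicFiltration r m N p l) {j : ℕ} (hj : j < r)
    (hlj : l j = canonFilt r N j) : canonFilt r N (j + 1) ≤ l (j + 1) := by
  have hXN := hl.X_pow_smul_mem (j := j + 1) hj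
  obtain ⟨-, -, -, hstab, -, hpar⟩ := hl
  refine canonFilt_le_of_single_mem hXN fun t ht => ?_
  have hdc : IsUnit (p t - p j) := by
    rw [isUnit_iff_constantCoeff, isUnit_iff_ne_zero, map_sub, sub_ne_zero]
    exact hdist t t.isLt j hj (by omega)
  refine mem_of_diagD_sub_smul_mem hm (hstab _ (lt_of_le_of_lt ht t.isLt))
    (hpar j hj) hdc hXN (hlj ▸ single_mem_canonFilt (t := t) (by omega) 1) ?_
  rw [diagD_single, sub_self]
  exact zero_mem _

lemma le_canonFilt_succ (hl : IsDeepParabolicFiltration r m N p l) {j : ℕ} (hj : j < r)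
    (hlj : l j = canonFilt r N j) (hle : canonFilt r N (j + 1) ≤ l (j + 1)) :
    l (j + 1) ≤ canonFilt r N (j + 1) := by
  obtain ⟨-, -, hmono, -, hgen, -⟩ := hl
  intro u hu
  set i : Fin r := ⟨j, hj⟩
  obtain ⟨e, he, -, hann⟩ := hgen j hj
  have hu' : u ∈ canonFilt r N j := hlj ▸ hmono j hj hu
  have hcross : u i • e - e i • u ∈ canonFilt r N (j + 1) :=
    (mem_canonFilt_succ (i := i) rfl).mpr ⟨sub_mem (Submodule.smul_mem _ _ (hlj ▸ he))
      (Submodule.smul_mem _ _ hu'), by simp [mul_comm]⟩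
  refine (mem_canonFilt_succ (i := i) rfl).mpr ⟨hu', hann (u i) ?_⟩
  simpa using (l (j + 1)).add_mem (hle hcross) ((l (j + 1)).smul_mem (e i) hu)

end IsDeepParabolicFiltration

theorem unique_deep_parabolic_filtration_general (r m N : ℕ) (hm : 2 ≤ m)
    (p : ℕ → PowerSeries ℂ)
    (hdist : ∀ j₁ < r, ∀ j₂ < r, j₁ ≠ j₂ →
      PowerSeries.constantCoeff (p j₁) ≠ PowerSeries.constantCoeff (p j₂)) :
    IsDeepParabolicFiltration r m N p (canonFilt r N) ∧
    ∀ l, IsDeepParabolicFiltration r m N p l → ∀ j ≤ r, l j = canonFilt r N j := by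
  refine ⟨isDeepParabolicFiltration_canonFilt (by omega) p, fun l hl j hj => ?_⟩
  induction j with
  | zero => rw [hl.1, canonFilt_zero]
  | succ j ih =>
    have hlj := ih (by omega)
    have hle := hl.canonFilt_succ_le hm hdist (by omega) hlj
    exact le_antisymm (hl.le_canonFilt_succ (by omega) hlj hle) hle

/-- **Uniqueness of the depth-`N` parabolic structure for generic exponents.**
Let `m ≥ 2`, `N ≥ m`, and let the polar forms `ν_j = p_j·dz/z^m` (with `p j` of
degree `< m`) have pairwise distinct leading coefficients `p_j(0)`. On
`V = V(ν_{r-1},1) ⊕ ⋯ ⊕ V(ν_0,1)` reduced modulo `z^N`, there is exactly one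
filtration with `D_N`-stable steps, free rank-one graded pieces and the
`ν`-parabolic condition of depth `N`; namely the canonical one, whose `j`-th step
is the image of `V(ν_{r-1},1) ⊕ ⋯ ⊕ V(ν_j,1)`. -/
theorem unique_deep_parabolic_filtration (r m N : ℕ) (hr : 1 ≤ r) (hm : 2 ≤ m)
    (hN : m ≤ N)
    (p : ℕ → PowerSeries ℂ)
    (hpbd : ∀ j < r, ∀ t, m ≤ t → PowerSeries.coeff t (p j) = 0)
    (hdist : ∀ j₁ < r, ∀ j₂ < r, j₁ ≠ j₂ →
      PowerSeries.constantCoeff (p j₁) ≠ PowerSeries.constantCoeff (p j₂)) :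
    IsDeepParabolicFiltration r m N p (canonFilt r N) ∧
    ∀ l, IsDeepParabolicFiltration r m N p l → ∀ j ≤ r, l j = canonFilt r N j :=
  unique_deep_parabolic_filtration_general r m N hm p hdist
end
end
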